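/- If a totally bounded set F ⊆ X is equi-homogeneous, F attains both its upper and lower box-counting dimensions, and dim_LB F = dim_B F, then dim_A F = dim_B F = dim_LB F = dim_LA F. -/

import Mathlib

/-!
Write `d` for the common value of the box dimensions. Attainment says `N(F, δ) ≍ δ^{-d}`, and
this extends to all scales `δ ≤ D` for any `D`. For the upper Assouad bound, equi-homogeneity
compares every ball with the best-covered ball of a slightly different size; a pigeonhole argument
over a maximal separated set finds a ball `B_{c₁δ}(p)` with
`N(B_{c₁δ}(p) ∩ F, c₂ρ) · N(F, ≈δ) ≤ N(F, ≈ρ)`, whence `N(B_δ(x) ∩ F, ρ) ≲ (δ/ρ)^d`.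
For the lower bound, covering `F` first at scale `δ` and then each `δ`-ball at scale `ρ` gives
`N(F, ρ) ≤ N(F, δ) · sup_x N(B_δ(x) ∩ F, ρ)`, and equi-homogeneity bounds the supremum by any single
ball, whence `N(B_δ(x) ∩ F, ρ) ≳ (δ/ρ)^d`. Conversely, applying an (upper or lower) Assouad exponent
`s` to one ball containing all of `F` and comparing with `N(F, ρ) ≍ ρ^{-d}` forces `s ≥ d`,
respectively `s ≤ d`.
-/

open Set Metric Filter Bornology MeasureTheory
open scoped ENNReal NNReal

/-- `coverNumber F δ` : the minimum number of closed `δ`-balls with centres in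
`F` needed to cover `F` (`∞` if there is no finite such cover). -/
noncomputable def coverNumber {X : Type*} [MetricSpace X] (F : Set X) (δ : ℝ) : ℝ≥0∞ :=
  ⨅ (t : Finset X) (_ : (t : Set X) ⊆ F) (_ : F ⊆ ⋃ x ∈ t, closedBall x δ),
    (t.card : ℝ≥0∞)

/-- `F` is equi-homogeneous: for every `δ₀ > 0` there are `M ≥ 1` and
`c₁, c₂ > 0` with
`sup_{x∈F} N(B_δ(x) ∩ F, ρ) ≤ M inf_{x∈F} N(B_{c₁δ}(x) ∩ F, c₂ρ)`
for all `0 < ρ < δ ≤ δ₀`. -/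
def EquiHomogeneous {X : Type*} [MetricSpace X] (F : Set X) : Prop :=
  ∀ δ₀ : ℝ, 0 < δ₀ → ∃ M c₁ c₂ : ℝ, 1 ≤ M ∧ 0 < c₁ ∧ 0 < c₂ ∧
    ∀ δ ρ : ℝ, 0 < ρ → ρ < δ → δ ≤ δ₀ →
      (⨆ x ∈ F, coverNumber (closedBall x δ ∩ F) ρ) ≤
        ENNReal.ofReal M * (⨅ x ∈ F, coverNumber (closedBall x (c₁ * δ) ∩ F) (c₂ * ρ))

/-- The Assouad dimension of `F`. -/
noncomputable def assouadDim {X : Type*} [MetricSpace X] (F : Set X) : ℝ :=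
  sInf {s : ℝ | 0 ≤ s ∧ ∀ δ₀ : ℝ, 0 < δ₀ → ∃ C : ℝ, 0 < C ∧
    ∀ x ∈ F, ∀ δ ρ : ℝ, 0 < ρ → ρ < δ → δ ≤ δ₀ →
      coverNumber (closedBall x δ ∩ F) ρ ≤ ENNReal.ofReal (C * (δ / ρ) ^ s)}

/-- The lower Assouad dimension of `F`. -/
noncomputable def lowerAssouadDim {X : Type*} [MetricSpace X] (F : Set X) : ℝ :=
  sSup {s : ℝ | 0 ≤ s ∧ ∀ δ₀ : ℝ, 0 < δ₀ → ∃ C : ℝ, 0 < C ∧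
    ∀ x ∈ F, ∀ δ ρ : ℝ, 0 < ρ → ρ < δ → δ ≤ δ₀ →
      ENNReal.ofReal (C * (δ / ρ) ^ s) ≤ coverNumber (closedBall x δ ∩ F) ρ}

/-- The upper box-counting dimension of `F`. -/
noncomputable def upperBoxDim {X : Type*} [MetricSpace X] (F : Set X) : ℝ :=
  Filter.limsup (fun δ : ℝ => Real.log (coverNumber F δ).toReal / -Real.log δ)
    (nhdsWithin 0 (Set.Ioi 0))

/-- The lower box-counting dimension of `F`. -/
noncomputable def lowerBoxDim {X : Type*} [MetricSpace X] (F : Set X) : ℝ :=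
  Filter.liminf (fun δ : ℝ => Real.log (coverNumber F δ).toReal / -Real.log δ)
    (nhdsWithin 0 (Set.Ioi 0))

section CoverNumber

variable {X : Type*} [MetricSpace X] {F A B : Set X}

lemma coverNumber_le_card {δ : ℝ} {t : Finset X} (ht : (t : Set X) ⊆ F)
    (hcov : F ⊆ ⋃ x ∈ t, closedBall x δ) : coverNumber F δ ≤ t.card :=
  iInf₂_le_of_le t ht (iInf_le _ hcov)

lemma coverNumber_anti {δ₁ δ₂ : ℝ} (h : δ₁ ≤ δ₂) : coverNumber F δ₂ ≤ coverNumber F δ₁ :=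
  le_iInf₂ fun _ ht => le_iInf fun hcov => coverNumber_le_card ht <|
    hcov.trans <| iUnion₂_mono fun _ _ => closedBall_subset_closedBall h

lemma coverNumber_empty (δ : ℝ) : coverNumber (∅ : Set X) δ = 0 :=
  nonpos_iff_eq_zero.1 <| by
    simpa using coverNumber_le_card (F := ∅) (δ := δ) (t := ∅) (by simp) (by simp)

lemma one_le_coverNumber (hne : F.Nonempty) (δ : ℝ) : 1 ≤ coverNumber F δ := by
  refine le_iInf₂ fun t _ => le_iInf fun hcov => ?_
  obtain ⟨y, hy, -⟩ := mem_iUnion₂.1 (hcov hne.some_mem)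
  exact_mod_cast Finset.card_pos.2 ⟨y, hy⟩

lemma coverNumber_eq_coveringNumber (F : Set X) (ε : ℝ≥0) :
    coverNumber F ε = coveringNumber ε F := by
  refine le_antisymm ?_ (le_iInf₂ fun t ht => le_iInf fun hcov => ?_)
  · by_cases h : coveringNumber ε F = ⊤
    · simp [h]
    obtain ⟨C, hCF, hCfin, hcov, hcard⟩ := exists_set_encard_eq_coveringNumber h
    rw [← hcard, ← hCfin.coe_toFinset, encard_coe_eq_coe_finsetCard, ENat.toENNReal_coe]
    exact coverNumber_le_card (by simpa) (by simpa using hcov.subset_iUnion_closedBall)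
  · rw [← ENat.toENNReal_coe, ← encard_coe_eq_coe_finsetCard, ENat.toENNReal_le]
    exact (IsCover.of_subset_iUnion_closedBall (by simpa using hcov)).coveringNumber_le_encard ht

lemma coverNumber_ne_top (hF : TotallyBounded F) {δ : ℝ} (hδ : 0 < δ) : coverNumber F δ ≠ ⊤ := by
  lift δ to ℝ≥0 using hδ.le
  obtain ⟨C, hCF, hCfin, hcov⟩ := exists_finite_isCover_of_totallyBounded (ne_of_gt hδ) hF
  rw [coverNumber_eq_coveringNumber, ENat.toENNReal_ne_top]
  exact ne_top_of_le_ne_top (encard_ne_top_iff.2 hCfin) (hcov.coveringNumber_le_encard hCF)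

lemma exists_finset_card_eq_coverNumber {δ : ℝ} (hδ : 0 ≤ δ) (h : coverNumber F δ ≠ ⊤) :
    ∃ t : Finset X, (t : Set X) ⊆ F ∧ F ⊆ (⋃ x ∈ t, closedBall x δ) ∧
      (t.card : ℝ≥0∞) = coverNumber F δ := by
  lift δ to ℝ≥0 using hδ
  rw [coverNumber_eq_coveringNumber, ENat.toENNReal_ne_top] at h
  obtain ⟨C, hCF, hCfin, hcov, hcard⟩ := exists_set_encard_eq_coveringNumber h
  refine ⟨hCfin.toFinset, by simpa, by simpa using hcov.subset_iUnion_closedBall, ?_⟩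
  rw [coverNumber_eq_coveringNumber, ← hcard, hCfin.encard_eq_coe_toFinset_card, ENat.toENNReal_coe]

lemma coverNumber_two_mul_le_card {r : ℝ} (hr : 0 ≤ r) (t : Finset X)
    (hcov : A ⊆ ⋃ x ∈ t, closedBall x r) : coverNumber A (2 * r) ≤ t.card := by
  lift r to ℝ≥0 using hr
  rw [← NNReal.coe_ofNat, ← NNReal.coe_mul, coverNumber_eq_coveringNumber, ← ENat.toENNReal_coe,
    ← encard_coe_eq_coe_finsetCard, ENat.toENNReal_le]
  exact (coveringNumber_two_mul_le_externalCoveringNumber r A).trans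
    (IsCover.of_subset_iUnion_closedBall (by simpa using hcov)).externalCoveringNumber_le_encard

lemma coverNumber_two_mul_le_of_subset (hAB : A ⊆ B) {r : ℝ} (hr : 0 ≤ r) :
    coverNumber A (2 * r) ≤ coverNumber B r := by
  lift r to ℝ≥0 using hr
  rw [← NNReal.coe_ofNat, ← NNReal.coe_mul, coverNumber_eq_coveringNumber,
    coverNumber_eq_coveringNumber, ENat.toENNReal_le]
  simpa using coveringNumber_subset_le (ε := 2 * r) hAB

lemma exists_separated_finset_coverNumber_le (hF : TotallyBounded F) {R : ℝ} (hR : 0 < R) :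
    ∃ P : Finset X, (P : Set X) ⊆ F ∧ (P : Set X).Pairwise (fun p q => R < dist p q) ∧
      coverNumber F R ≤ P.card := by
  lift R to ℝ≥0 using hR.le
  have hfin : packingNumber R F ≠ ⊤ := by
    have h := (packingNumber_two_mul_le_externalCoveringNumber (R / 2) F).trans
      (externalCoveringNumber_le_coveringNumber _ F)
    rw [mul_div_cancel₀ _ two_ne_zero] at h
    refine ne_top_of_le_ne_top ?_ h
    rw [← ENat.toENNReal_ne_top, ← coverNumber_eq_coveringNumber]
    exact coverNumber_ne_top hF (by simpa using hR)
  have hPfin : (maximalSeparatedSet R F).Finite := by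
    rw [← encard_ne_top_iff, encard_maximalSeparatedSet hfin]; exact hfin
  refine ⟨hPfin.toFinset, by simpa using maximalSeparatedSet_subset, ?_, ?_⟩
  · intro p hp q hq hpq
    have : (R : ℝ≥0∞) < edist p q :=
      isSeparated_maximalSeparatedSet (by simpa using hp) (by simpa using hq) hpq
    rw [edist_dist, ← ENNReal.ofReal_coe_nnreal] at this
    exact (ENNReal.ofReal_lt_ofReal_iff_of_nonneg R.2).1 this
  · rw [coverNumber_eq_coveringNumber, ← ENat.toENNReal_coe, ← hPfin.encard_eq_coe_toFinset_card,
      encard_maximalSeparatedSet hfin, ENat.toENNReal_le]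
    exact coveringNumber_le_packingNumber R F

end CoverNumber

section Counting

variable {X : Type*} [MetricSpace X] {F : Set X}

lemma coverNumber_le_mul_iSup (hF : TotallyBounded F) {δ ρ : ℝ} (hδ : 0 < δ) (hρ : 0 < ρ) :
    coverNumber F ρ ≤ coverNumber F δ * ⨆ x ∈ F, coverNumber (closedBall x δ ∩ F) ρ := by
  classical
  obtain ⟨t, htF, htcov, htcard⟩ :=
    exists_finset_card_eq_coverNumber hδ.le (coverNumber_ne_top hF hδ)
  have hball (x : X) : ∃ s : Finset X, (s : Set X) ⊆ closedBall x δ ∩ F ∧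
      closedBall x δ ∩ F ⊆ (⋃ y ∈ s, closedBall y ρ) ∧
      (s.card : ℝ≥0∞) = coverNumber (closedBall x δ ∩ F) ρ :=
    exists_finset_card_eq_coverNumber hρ.le (coverNumber_ne_top (hF.subset inter_subset_right) hρ)
  choose s hsF hscov hscard using hball
  have hcov : F ⊆ ⋃ y ∈ t.biUnion s, closedBall y ρ := by
    intro z hz
    obtain ⟨x, hx, hzx⟩ := mem_iUnion₂.1 (htcov hz)
    obtain ⟨y, hy, hzy⟩ := mem_iUnion₂.1 (hscov x ⟨hzx, hz⟩)
    exact mem_iUnion₂.2 ⟨y, Finset.mem_biUnion.2 ⟨x, hx, hy⟩, hzy⟩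
  have hsub : ((t.biUnion s : Finset X) : Set X) ⊆ F := by
    simpa using fun x _ => (hsF x).trans inter_subset_right
  calc coverNumber F ρ ≤ (t.biUnion s).card := coverNumber_le_card hsub hcov
    _ ≤ ∑ x ∈ t, ((s x).card : ℝ≥0∞) := by exact_mod_cast Finset.card_biUnion_le
    _ ≤ ∑ _x ∈ t, ⨆ x ∈ F, coverNumber (closedBall x δ ∩ F) ρ := by
      refine Finset.sum_le_sum fun x hx => (hscard x).trans_le ?_
      exact le_iSup₂ (f := fun x _ => coverNumber (closedBall x δ ∩ F) ρ) x (htF hx)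
    _ = coverNumber F δ * ⨆ x ∈ F, coverNumber (closedBall x δ ∩ F) ρ := by
      rw [Finset.sum_const, nsmul_eq_mul, htcard]

lemma exists_coverNumber_closedBall_mul_le (hF : TotallyBounded F) (hne : F.Nonempty) {r ρ : ℝ}
    (hr : 0 ≤ r) (hρ : 0 < ρ) :
    ∃ p ∈ F, coverNumber (closedBall p r ∩ F) ρ * coverNumber F (2 * r + ρ) ≤
      coverNumber F (ρ / 2) := by
  classical
  obtain ⟨P, hPF, hPsep, hPcard⟩ :=
    exists_separated_finset_coverNumber_le hF (R := 2 * r + ρ) (by positivity)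
  obtain ⟨T, -, hTcov, hTcard⟩ :=
    exists_finset_card_eq_coverNumber (half_pos hρ).le (coverNumber_ne_top hF (half_pos hρ))
  -- Points of `T` near distinct points of the `(2r + ρ)`-separated set `P` are distinct, so some
  -- `p ∈ P` has at most `#T / #P` of them, and these cover `B_r(p) ∩ F` at radius `ρ / 2`.
  let near (p : X) : Finset X := T.filter fun z => dist z p ≤ r + ρ / 2
  have hdisj : (P : Set X).PairwiseDisjoint near := by
    intro p hp q hq hpq
    refine Finset.disjoint_left.2 fun z hzp hzq => (hPsep hp hq hpq).not_ge ?_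
    simp only [near, Finset.mem_filter] at hzp hzq
    linarith [dist_triangle_left p q z]
  have hPne : P.Nonempty :=
    Finset.card_pos.1 <| Nat.one_le_cast.1 <| (one_le_coverNumber hne _).trans hPcard
  obtain ⟨p, hpP, hpmin⟩ := P.exists_min_image (fun p => (near p).card) hPne
  have hmul : P.card * (near p).card ≤ T.card := calc
    P.card * (near p).card ≤ ∑ q ∈ P, (near q).card := by
      simpa using Finset.card_nsmul_le_sum P (fun q => (near q).card) _ hpmin
    _ = (P.biUnion near).card := (Finset.card_biUnion hdisj).symm
    _ ≤ T.card := Finset.card_le_card (Finset.biUnion_subset.2 fun _ _ => Finset.filter_subset _ _)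
  have hball : coverNumber (closedBall p r ∩ F) ρ ≤ (near p).card := by
    have hcov : closedBall p r ∩ F ⊆ ⋃ z ∈ near p, closedBall z (ρ / 2) := by
      rintro y ⟨hyp, hyF⟩
      obtain ⟨z, hzT, hyz⟩ := mem_iUnion₂.1 (hTcov hyF)
      refine mem_iUnion₂.2 ⟨z, Finset.mem_filter.2 ⟨hzT, ?_⟩, hyz⟩
      linarith [dist_triangle_left z p y, mem_closedBall.1 hyp, mem_closedBall.1 hyz]
    simpa [mul_div_cancel₀] using coverNumber_two_mul_le_card (half_pos hρ).le _ hcov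
  refine ⟨p, hPF hpP, ?_⟩
  calc coverNumber (closedBall p r ∩ F) ρ * coverNumber F (2 * r + ρ)
      ≤ (near p).card * P.card := mul_le_mul' hball hPcard
    _ ≤ T.card := by rw [mul_comm]; exact_mod_cast hmul
    _ = coverNumber F (ρ / 2) := hTcard

end Counting

lemma ENNReal.le_ofReal_div_of_mul_ofReal_le {a : ℝ≥0∞} {b c : ℝ} (hb : 0 < b)
    (h : a * ENNReal.ofReal b ≤ ENNReal.ofReal c) : a ≤ ENNReal.ofReal (c / b) := by
  rw [ENNReal.ofReal_div_of_pos hb]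
  exact (ENNReal.le_div_iff_mul_le (Or.inl (by simpa)) (Or.inl ENNReal.ofReal_ne_top)).2 h

lemma ENNReal.ofReal_div_le_of_le_ofReal_mul {a : ℝ≥0∞} {b c : ℝ} (hb : 0 < b)
    (h : ENNReal.ofReal c ≤ ENNReal.ofReal b * a) : ENNReal.ofReal (c / b) ≤ a := by
  rw [ENNReal.ofReal_div_of_pos hb]
  exact ENNReal.div_le_of_le_mul' h

lemma Real.rpow_neg_div_rpow_neg {a b : ℝ} (ha : 0 < a) (hb : 0 < b) (d : ℝ) :
    a ^ (-d) / b ^ (-d) = (b / a) ^ d := by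
  rw [Real.rpow_neg ha.le, Real.rpow_neg hb.le, Real.div_rpow hb.le ha.le, inv_div_inv]

lemma le_of_forall_rpow_le_mul_rpow {a b K δ₀ : ℝ} (hδ₀ : 0 < δ₀)
    (h : ∀ δ, 0 < δ → δ < δ₀ → δ ^ a ≤ K * δ ^ b) : b ≤ a := by
  by_contra! hab
  obtain ⟨δ, hK, hδ, hδδ₀⟩ :=
    (((tendsto_rpow_neg_nhdsGT_zero (sub_neg.2 hab)).eventually_gt_atTop K).and
      (Ioo_mem_nhdsGT hδ₀)).exists
  rw [Real.rpow_sub hδ, lt_div_iff₀ (Real.rpow_pos_of_pos hδ b)] at hK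
  linarith [h δ hδ hδδ₀]

section Exponents

variable {X : Type*} [MetricSpace X] {F : Set X} {d s : ℝ}

def IsAssouadExponent (F : Set X) (s : ℝ) : Prop :=
  ∀ δ₀ : ℝ, 0 < δ₀ → ∃ C : ℝ, 0 < C ∧ ∀ x ∈ F, ∀ δ ρ : ℝ, 0 < ρ → ρ < δ → δ ≤ δ₀ →
    coverNumber (closedBall x δ ∩ F) ρ ≤ ENNReal.ofReal (C * (δ / ρ) ^ s)

def IsLowerAssouadExponent (F : Set X) (s : ℝ) : Prop :=
  ∀ δ₀ : ℝ, 0 < δ₀ → ∃ C : ℝ, 0 < C ∧ ∀ x ∈ F, ∀ δ ρ : ℝ, 0 < ρ → ρ < δ → δ ≤ δ₀ →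
    ENNReal.ofReal (C * (δ / ρ) ^ s) ≤ coverNumber (closedBall x δ ∩ F) ρ

def HasUpperBoxBound (F : Set X) (d : ℝ) : Prop :=
  ∀ D : ℝ, 0 < D → ∃ C : ℝ, 0 < C ∧ ∀ δ : ℝ, 0 < δ → δ ≤ D →
    coverNumber F δ ≤ ENNReal.ofReal (C * δ ^ (-d))

def HasLowerBoxBound (F : Set X) (d : ℝ) : Prop :=
  ∀ D : ℝ, 0 < D → ∃ C : ℝ, 0 < C ∧ ∀ δ : ℝ, 0 < δ → δ ≤ D →
    ENNReal.ofReal (C * δ ^ (-d)) ≤ coverNumber F δ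

lemma assouadDim_eq_of_isAssouadExponent (hd : 0 ≤ d) (h : IsAssouadExponent F d)
    (hmin : ∀ s, IsAssouadExponent F s → d ≤ s) : assouadDim F = d :=
  IsLeast.csInf_eq ⟨⟨hd, h⟩, fun s hs => hmin s hs.2⟩

lemma lowerAssouadDim_eq_of_isLowerAssouadExponent (hd : 0 ≤ d) (h : IsLowerAssouadExponent F d)
    (hmax : ∀ s, IsLowerAssouadExponent F s → s ≤ d) : lowerAssouadDim F = d :=
  IsGreatest.csSup_eq ⟨⟨hd, h⟩, fun s hs => hmax s hs.2⟩

lemma nonempty_of_ofReal_le_coverNumber {c δ : ℝ} (hc : 0 < c)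
    (h : ENNReal.ofReal c ≤ coverNumber F δ) : F.Nonempty := by
  rw [nonempty_iff_ne_empty]
  rintro rfl
  rw [coverNumber_empty, nonpos_iff_eq_zero, ENNReal.ofReal_eq_zero] at h
  linarith

lemma ofReal_rpow_le_coverNumber_closedBall_of_div_le {x : X} (hx : x ∈ F) (hd : 0 ≤ d)
    {δ ρ B : ℝ} (hδ : 0 ≤ δ) (hρ : 0 < ρ) (hB : 0 < B) (hδρ : δ / ρ ≤ B) :
    ENNReal.ofReal ((B ^ d)⁻¹ * (δ / ρ) ^ d) ≤ coverNumber (closedBall x δ ∩ F) ρ := by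
  refine le_trans ?_
    (one_le_coverNumber (F := closedBall x δ ∩ F) ⟨x, mem_closedBall_self hδ, hx⟩ ρ)
  rw [ENNReal.ofReal_le_one, inv_mul_le_iff₀ (by positivity), mul_one]
  gcongr

lemma nonneg_of_coverNumber_le (hne : F.Nonempty) {C δ₀ : ℝ} (hδ₀ : 0 < δ₀)
    (h : ∀ δ, 0 < δ → δ ≤ δ₀ → coverNumber F δ ≤ ENNReal.ofReal (C * δ ^ (-d))) : 0 ≤ d := by
  refine neg_nonpos.1 (le_of_forall_rpow_le_mul_rpow (a := 0) (K := C) hδ₀ fun δ hδ hδδ₀ => ?_)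
  rw [Real.rpow_zero]
  exact ENNReal.one_le_ofReal.1 ((one_le_coverNumber hne δ).trans (h δ hδ hδδ₀.le))

lemma hasUpperBoxBound_of_le (hd : 0 ≤ d) {C δ₀ : ℝ} (hC : 0 < C) (hδ₀ : 0 < δ₀)
    (h : ∀ δ, 0 < δ → δ ≤ δ₀ → coverNumber F δ ≤ ENNReal.ofReal (C * δ ^ (-d))) :
    HasUpperBoxBound F d := by
  intro D hD
  refine ⟨max C (C * (D / δ₀) ^ d), lt_max_of_lt_left hC, fun δ hδ hδD => ?_⟩
  rcases le_total δ δ₀ with hle | hle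
  · exact (h δ hδ hle).trans (ENNReal.ofReal_le_ofReal (by gcongr; exact le_max_left _ _))
  refine (coverNumber_anti hle).trans ((h δ₀ hδ₀ le_rfl).trans (ENNReal.ofReal_le_ofReal ?_))
  calc C * δ₀ ^ (-d) = C * (D / δ₀) ^ d * D ^ (-d) := by
        rw [← Real.rpow_neg_div_rpow_neg hδ₀ hD, mul_assoc, div_mul_cancel₀ _ (by positivity)]
    _ ≤ max C (C * (D / δ₀) ^ d) * δ ^ (-d) :=
        mul_le_mul (le_max_right _ _) (Real.rpow_le_rpow_of_nonpos hδ hδD (neg_nonpos.2 hd))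
          (by positivity) (by positivity)

lemma hasLowerBoxBound_of_le (hne : F.Nonempty) (hd : 0 ≤ d) {C δ₀ : ℝ} (hC : 0 < C)
    (hδ₀ : 0 < δ₀) (h : ∀ δ, 0 < δ → δ ≤ δ₀ → ENNReal.ofReal (C * δ ^ (-d)) ≤ coverNumber F δ) :
    HasLowerBoxBound F d := by
  refine fun _ _ => ⟨min C (δ₀ ^ d), lt_min hC (by positivity), fun δ hδ _ => ?_⟩
  rcases le_total δ δ₀ with hle | hle
  · exact (ENNReal.ofReal_le_ofReal (by gcongr; exact min_le_left _ _)).trans (h δ hδ hle)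
  refine le_trans ?_ (one_le_coverNumber hne δ)
  rw [ENNReal.ofReal_le_one]
  calc min C (δ₀ ^ d) * δ ^ (-d) ≤ δ₀ ^ d * δ₀ ^ (-d) :=
        mul_le_mul (min_le_right _ _) (Real.rpow_le_rpow_of_nonpos hδ₀ hle (neg_nonpos.2 hd))
          (by positivity) (by positivity)
    _ = 1 := by rw [Real.rpow_neg hδ₀.le, mul_inv_cancel₀ (by positivity)]

lemma HasLowerBoxBound.le_of_isAssouadExponent (hlo : HasLowerBoxBound F d) (hF : IsBounded F)
    (hne : F.Nonempty) (hs : IsAssouadExponent F s) : d ≤ s := by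
  obtain ⟨x₀, hx₀⟩ := hne
  obtain ⟨R, hR, hFR⟩ := hF.subset_closedBall_lt 0 x₀
  obtain ⟨C, hC, hs⟩ := hs R hR
  obtain ⟨Cl, hCl, hlo⟩ := hlo R hR
  refine neg_le_neg_iff.1 <| le_of_forall_rpow_le_mul_rpow (K := C * R ^ s / Cl) hR
    fun ρ hρ hρR => ?_
  have hball := hs x₀ hx₀ R ρ hρ hρR le_rfl
  rw [inter_eq_right.2 hFR] at hball
  have h := (hlo ρ hρ hρR.le).trans hball
  rw [ENNReal.ofReal_le_ofReal_iff (by positivity), Real.div_rpow hR.le hρ.le, div_eq_mul_inv,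
    ← Real.rpow_neg hρ.le] at h
  rw [div_mul_eq_mul_div, le_div_iff₀ hCl]
  linarith

lemma HasUpperBoxBound.le_of_isLowerAssouadExponent (hup : HasUpperBoxBound F d)
    (hF : IsBounded F) (hne : F.Nonempty) (hs : IsLowerAssouadExponent F s) : s ≤ d := by
  obtain ⟨x₀, hx₀⟩ := hne
  obtain ⟨R, hR, hFR⟩ := hF.subset_closedBall_lt 0 x₀
  obtain ⟨C, hC, hs⟩ := hs R hR
  obtain ⟨Cu, hCu, hup⟩ := hup R hR
  refine neg_le_neg_iff.1 <| le_of_forall_rpow_le_mul_rpow (K := Cu / (C * R ^ s)) hR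
    fun ρ hρ hρR => ?_
  have hball := hs x₀ hx₀ R ρ hρ hρR le_rfl
  rw [inter_eq_right.2 hFR] at hball
  have h := hball.trans (hup ρ hρ hρR.le)
  rw [ENNReal.ofReal_le_ofReal_iff (by positivity), Real.div_rpow hR.le hρ.le, div_eq_mul_inv,
    ← Real.rpow_neg hρ.le] at h
  rw [div_mul_eq_mul_div, le_div_iff₀ (by positivity)]
  linarith

lemma exists_coverNumber_closedBall_le (hF : TotallyBounded F) (hne : F.Nonempty)
    (hup : HasUpperBoxBound F d) (hlo : HasLowerBoxBound F d) {D : ℝ} (hD : 0 < D) :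
    ∃ C : ℝ, 0 < C ∧ ∀ r ρ : ℝ, 0 ≤ r → 0 < ρ → 2 * r + ρ ≤ D →
      ∃ p ∈ F, coverNumber (closedBall p r ∩ F) ρ ≤ ENNReal.ofReal (C * ((2 * r + ρ) / ρ) ^ d) := by
  obtain ⟨Cu, hCu, hup⟩ := hup D hD
  obtain ⟨Cl, hCl, hlo⟩ := hlo D hD
  refine ⟨Cu / Cl * 2 ^ d, by positivity, fun r ρ hr hρ hrρ => ?_⟩
  obtain ⟨p, hp, hpig⟩ := exists_coverNumber_closedBall_mul_le hF hne hr hρ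
  have hρ2 : 0 < ρ / 2 := half_pos hρ
  have hb : 0 < 2 * r + ρ := by positivity
  have hconst : Cu / Cl * 2 ^ d * ((2 * r + ρ) / ρ) ^ d =
      Cu * (ρ / 2) ^ (-d) / (Cl * (2 * r + ρ) ^ (-d)) := by
    rw [mul_div_mul_comm, Real.rpow_neg_div_rpow_neg hρ2 hb, mul_assoc,
      ← Real.mul_rpow (by positivity) (by positivity), mul_div_assoc', div_div_eq_mul_div,
      mul_comm 2 (2 * r + ρ)]
  refine ⟨p, hp, hconst ▸ ENNReal.le_ofReal_div_of_mul_ofReal_le (by positivity) ?_⟩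
  calc _ ≤ coverNumber (closedBall p r ∩ F) ρ * coverNumber F (2 * r + ρ) := by
        gcongr; exact hlo _ hb hrρ
    _ ≤ coverNumber F (ρ / 2) := hpig
    _ ≤ ENNReal.ofReal (Cu * (ρ / 2) ^ (-d)) := hup _ hρ2 (by linarith)

end Exponents

section EquiHomogeneous

variable {X : Type*} [MetricSpace X] {F : Set X} {d : ℝ}

lemma EquiHomogeneous.exists_one_le_ballFactor (heh : EquiHomogeneous F) {δ₀ : ℝ} (hδ₀ : 0 < δ₀) :
    ∃ M c₁ c₂ : ℝ, 0 < M ∧ 1 ≤ c₁ ∧ 0 < c₂ ∧ ∀ δ ρ : ℝ, 0 < ρ → ρ < δ → δ ≤ δ₀ →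
      (⨆ x ∈ F, coverNumber (closedBall x δ ∩ F) ρ) ≤
        ENNReal.ofReal M * ⨅ x ∈ F, coverNumber (closedBall x (c₁ * δ) ∩ F) (c₂ * ρ) := by
  obtain ⟨M, c₁, c₂, hM, hc₁, hc₂, h⟩ := heh δ₀ hδ₀
  refine ⟨M, max c₁ 1, c₂ / 2, by linarith, le_max_right _ _, by positivity,
    fun δ ρ hρ hρδ hδ => (h δ ρ hρ hρδ hδ).trans ?_⟩
  gcongr with x hx
  have hsub : closedBall x (c₁ * δ) ∩ F ⊆ closedBall x (max c₁ 1 * δ) ∩ F :=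
    inter_subset_inter_left _ <| closedBall_subset_closedBall <| by
      gcongr
      · linarith
      · exact le_max_left _ _
  rw [show c₂ * ρ = 2 * (c₂ / 2 * ρ) by ring]
  exact coverNumber_two_mul_le_of_subset hsub (by positivity)

theorem EquiHomogeneous.isAssouadExponent (heh : EquiHomogeneous F) (hF : TotallyBounded F)
    (hne : F.Nonempty) (hup : HasUpperBoxBound F d) (hlo : HasLowerBoxBound F d) (hd : 0 ≤ d) :
    IsAssouadExponent F d := by
  intro δ₀ hδ₀
  obtain ⟨M, c₁, c₂, hM, hc₁, hc₂, hheh⟩ := heh.exists_one_le_ballFactor hδ₀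
  obtain ⟨C, hC, hgood⟩ := exists_coverNumber_closedBall_le hF hne hup hlo (D := (2 * c₁ + c₂) * δ₀)
    (by positivity)
  refine ⟨M * C * ((2 * c₁ + c₂) / c₂) ^ d, by positivity, fun x hx δ ρ hρ hρδ hδ => ?_⟩
  have hc₁' : 0 < c₁ := zero_lt_one.trans_le hc₁
  have hδpos : 0 < δ := hρ.trans hρδ
  obtain ⟨p, hp, hball⟩ := hgood (c₁ * δ) (c₂ * ρ) (by positivity) (by positivity) (by
    nlinarith [mul_le_mul_of_nonneg_left hδ hc₁'.le,
      mul_le_mul_of_nonneg_left (hρδ.le.trans hδ) hc₂.le])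
  have hratio : (2 * (c₁ * δ) + c₂ * ρ) / (c₂ * ρ) ≤ (2 * c₁ + c₂) / c₂ * (δ / ρ) := by
    rw [div_mul_div_comm, div_le_div_iff_of_pos_right (by positivity)]
    nlinarith [mul_le_mul_of_nonneg_left hρδ.le hc₂.le]
  calc coverNumber (closedBall x δ ∩ F) ρ ≤ ⨆ y ∈ F, coverNumber (closedBall y δ ∩ F) ρ :=
        le_iSup₂ (f := fun y _ => coverNumber (closedBall y δ ∩ F) ρ) x hx
    _ ≤ ENNReal.ofReal M * ⨅ y ∈ F, coverNumber (closedBall y (c₁ * δ) ∩ F) (c₂ * ρ) :=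
        hheh δ ρ hρ hρδ hδ
    _ ≤ ENNReal.ofReal M * coverNumber (closedBall p (c₁ * δ) ∩ F) (c₂ * ρ) := by
        gcongr; exact iInf₂_le p hp
    _ ≤ ENNReal.ofReal M * ENNReal.ofReal (C * ((2 * (c₁ * δ) + c₂ * ρ) / (c₂ * ρ)) ^ d) := by
        gcongr
    _ ≤ ENNReal.ofReal (M * C * ((2 * c₁ + c₂) / c₂) ^ d * (δ / ρ) ^ d) := by
        rw [← ENNReal.ofReal_mul hM.le, mul_assoc _ (_ ^ d), ← Real.mul_rpow (by positivity)
          (by positivity), ← mul_assoc]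
        gcongr

lemma EquiHomogeneous.exists_coverNumber_le_mul_coverNumber_closedBall (heh : EquiHomogeneous F)
    (hF : TotallyBounded F) {δ₀ : ℝ} (hδ₀ : 0 < δ₀) :
    ∃ M c₁ c₂ : ℝ, 0 < M ∧ 1 ≤ c₁ ∧ 0 < c₂ ∧ ∀ x ∈ F, ∀ δ ρ : ℝ, 0 < ρ → c₁ * ρ < c₂ * δ →
      δ ≤ δ₀ → coverNumber F (ρ / c₂) ≤
        ENNReal.ofReal M * coverNumber F (δ / c₁) * coverNumber (closedBall x δ ∩ F) ρ := by
  obtain ⟨M, c₁, c₂, hM, hc₁, hc₂, hheh⟩ := heh.exists_one_le_ballFactor hδ₀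
  refine ⟨M, c₁, c₂, hM, hc₁, hc₂, fun x hx δ ρ hρ hρδ hδ => ?_⟩
  have hc₁' : 0 < c₁ := zero_lt_one.trans_le hc₁
  have hρ' : 0 < ρ / c₂ := by positivity
  have hρδ' : ρ / c₂ < δ / c₁ := by rwa [div_lt_div_iff₀ hc₂ hc₁', mul_comm ρ, mul_comm δ]
  have hδ' : δ / c₁ ≤ δ₀ := (div_le_self (by nlinarith) hc₁).trans hδ
  calc coverNumber F (ρ / c₂)
      ≤ coverNumber F (δ / c₁) * ⨆ y ∈ F, coverNumber (closedBall y (δ / c₁) ∩ F) (ρ / c₂) :=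
        coverNumber_le_mul_iSup hF (hρ'.trans hρδ') hρ'
    _ ≤ coverNumber F (δ / c₁) * (ENNReal.ofReal M *
          ⨅ y ∈ F, coverNumber (closedBall y (c₁ * (δ / c₁)) ∩ F) (c₂ * (ρ / c₂))) := by
        gcongr
        exact hheh _ _ hρ' hρδ' hδ'
    _ ≤ coverNumber F (δ / c₁) * (ENNReal.ofReal M * coverNumber (closedBall x δ ∩ F) ρ) := by
        rw [mul_div_cancel₀ δ hc₁'.ne', mul_div_cancel₀ ρ hc₂.ne']
        gcongr
        exact iInf₂_le x hx
    _ = ENNReal.ofReal M * coverNumber F (δ / c₁) * coverNumber (closedBall x δ ∩ F) ρ := by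
        ring

theorem EquiHomogeneous.isLowerAssouadExponent (heh : EquiHomogeneous F) (hF : TotallyBounded F)
    (hup : HasUpperBoxBound F d) (hlo : HasLowerBoxBound F d) (hd : 0 ≤ d) :
    IsLowerAssouadExponent F d := by
  intro δ₀ hδ₀
  obtain ⟨M, c₁, c₂, hM, hc₁, hc₂, hcomp⟩ :=
    heh.exists_coverNumber_le_mul_coverNumber_closedBall hF hδ₀
  obtain ⟨Cu, hCu, hup⟩ := hup δ₀ hδ₀
  obtain ⟨Cl, hCl, hlo⟩ := hlo δ₀ hδ₀
  have hc₁' : 0 < c₁ := zero_lt_one.trans_le hc₁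
  refine ⟨min ((c₁ / c₂) ^ d)⁻¹ (Cl / (M * Cu) * (c₂ / c₁) ^ d), by positivity,
    fun x hx δ ρ hρ hρδ hδ => ?_⟩
  have hδpos : 0 < δ := hρ.trans hρδ
  rcases le_or_gt (δ / ρ) (c₁ / c₂) with hratio | hratio
  · exact (ENNReal.ofReal_le_ofReal (by gcongr; exact min_le_left _ _)).trans
      (ofReal_rpow_le_coverNumber_closedBall_of_div_le hx hd hδpos.le hρ (by positivity) hratio)
  rw [div_lt_div_iff₀ hc₂ hρ, mul_comm δ] at hratio
  have hδ' : δ / c₁ ≤ δ₀ := (div_le_self hδpos.le hc₁).trans hδ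
  have hρ' : ρ / c₂ ≤ δ₀ := by
    refine le_trans ?_ hδ'
    rw [div_le_div_iff₀ hc₂ hc₁']
    linarith
  have key : ENNReal.ofReal (Cl * (ρ / c₂) ^ (-d)) ≤
      ENNReal.ofReal (M * (Cu * (δ / c₁) ^ (-d))) * coverNumber (closedBall x δ ∩ F) ρ := calc
    _ ≤ coverNumber F (ρ / c₂) := hlo _ (by positivity) hρ'
    _ ≤ ENNReal.ofReal M * coverNumber F (δ / c₁) * coverNumber (closedBall x δ ∩ F) ρ :=
        hcomp x hx δ ρ hρ hratio hδ
    _ ≤ ENNReal.ofReal M * ENNReal.ofReal (Cu * (δ / c₁) ^ (-d)) *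
          coverNumber (closedBall x δ ∩ F) ρ := by
        gcongr
        exact hup _ (by positivity) hδ'
    _ = _ := by rw [← ENNReal.ofReal_mul hM.le]
  refine le_trans (ENNReal.ofReal_le_ofReal ?_)
    (ENNReal.ofReal_div_le_of_le_ofReal_mul (by positivity) key)
  calc _ ≤ Cl / (M * Cu) * (c₂ / c₁) ^ d * (δ / ρ) ^ d := by
        gcongr
        exact min_le_right _ _
    _ = Cl * (ρ / c₂) ^ (-d) / (M * (Cu * (δ / c₁) ^ (-d))) := by
        rw [← mul_assoc M, mul_div_mul_comm, Real.rpow_neg_div_rpow_neg (by positivity)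
          (by positivity), mul_assoc, ← Real.mul_rpow (by positivity) (by positivity)]
        congr 2
        field_simp

end EquiHomogeneous

/-- If a totally bounded set `F` is equi-homogeneous, attains both
its upper and lower box-counting dimensions, and `dim_LB F = dim_B F`, then
`dim_A F = dim_B F = dim_LB F = dim_LA F`. -/
theorem equiHomogeneous_attained_boxDims_eq {X : Type*} [MetricSpace X] (F : Set X)
    (htb : TotallyBounded F)
    (heh : EquiHomogeneous F)
    (hupper : ∃ δ₀ C : ℝ, 0 < δ₀ ∧ 1 ≤ C ∧ ∀ δ : ℝ, 0 < δ → δ ≤ δ₀ →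
      coverNumber F δ ≤ ENNReal.ofReal (C * δ ^ (-upperBoxDim F)))
    (hlower : ∃ δ₀ C : ℝ, 0 < δ₀ ∧ 1 ≤ C ∧ ∀ δ : ℝ, 0 < δ → δ ≤ δ₀ →
      ENNReal.ofReal (C⁻¹ * δ ^ (-lowerBoxDim F)) ≤ coverNumber F δ)
    (heq : lowerBoxDim F = upperBoxDim F) :
    assouadDim F = upperBoxDim F ∧ upperBoxDim F = lowerBoxDim F ∧
      lowerBoxDim F = lowerAssouadDim F := by
  obtain ⟨δ₁, C₁, hδ₁, hC₁, hupper⟩ := hupper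
  obtain ⟨δ₂, C₂, hδ₂, hC₂, hlower⟩ := hlower
  rw [heq] at hlower ⊢
  have hne : F.Nonempty :=
    nonempty_of_ofReal_le_coverNumber (by positivity) (hlower δ₂ hδ₂ le_rfl)
  have hd : 0 ≤ upperBoxDim F := nonneg_of_coverNumber_le hne hδ₁ hupper
  have hup := hasUpperBoxBound_of_le hd (zero_lt_one.trans_le hC₁) hδ₁ hupper
  have hlo := hasLowerBoxBound_of_le hne hd (inv_pos.2 (zero_lt_one.trans_le hC₂)) hδ₂ hlower
  refine ⟨assouadDim_eq_of_isAssouadExponent hd (heh.isAssouadExponent htb hne hup hlo hd)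
    fun s hs => hlo.le_of_isAssouadExponent htb.isBounded hne hs, rfl, ?_⟩
  exact (lowerAssouadDim_eq_of_isLowerAssouadExponent hd (heh.isLowerAssouadExponent htb hup hlo hd)
    fun s hs => hup.le_of_isLowerAssouadExponent htb.isBounded hne hs).symm
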